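/- arXiv:1803.06486 — 7 statements merged into one kernel-verified Lean document; each statement's English description precedes it below -/
import Mathlib

section
/- Let f : ℝ → ℝ be positive and differentiable at r₀ > 0, let δ > 0 and ω ∈ ℝ, and define Ω(r) := 1/(1 - ω²·f(r)·r^(-2)), assuming 1 - ω²·f(r₀)·r₀^(-2) > 0. Then it is impossible that both (r^δ·Ω(r)^(-1))'(r₀) = 0 and (f(r)·Ω(r))'(r₀) = 0 hold simultaneously. -/
/-!
Write `g r = 1 - ω² f(r) r⁻²`, so that `Ω = g⁻¹`. Stationarity of `f / g` says `f' g = f g'`, and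
stationarity of `r^δ g` says `r₀ g' = -δ g < 0`. Together they give `r₀ f' = -δ f`, and substituting
this into `g' = -ω² (f' r⁻² - 2 f r⁻³)` yields `r₀ g' = ω² f r₀⁻² (δ + 2) ≥ 0`, a contradiction.
-/

open Real

lemma mul_eq_mul_of_deriv_mul_inv_eq_zero {f g : ℝ → ℝ} {f' g' x : ℝ}
    (hf : HasDerivAt f f' x) (hg : HasDerivAt g g' x) (hgx : g x ≠ 0)
    (h : deriv (fun r => f r * (g r)⁻¹) x = 0) : f' * g x = f x * g' := by
  have hd : HasDerivAt (fun r => f r * (g r)⁻¹) (f' * (g x)⁻¹ + f x * (-g' / g x ^ 2)) x :=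
    hf.mul (hg.inv hgx)
  rw [hd.deriv] at h
  field_simp at h
  linear_combination h

lemma mul_eq_neg_mul_of_deriv_rpow_mul_eq_zero {g : ℝ → ℝ} {g' x δ : ℝ} (hx : 0 < x)
    (hg : HasDerivAt g g' x) (h : deriv (fun r => r ^ δ * g r) x = 0) :
    x * g' = -δ * g x := by
  have hd : HasDerivAt (fun r => r ^ δ * g r) (δ * x ^ (δ - 1) * g x + x ^ δ * g') x :=
    (hasDerivAt_rpow_const (Or.inl hx.ne')).mul hg
  rw [hd.deriv] at h
  have hpow : x ^ δ = x ^ (δ - 1) * x := by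
    rw [← rpow_add_one hx.ne']; ring_nf
  rw [hpow] at h
  have : x ^ (δ - 1) * (δ * g x + x * g') = 0 := by linear_combination h
  linarith [(mul_eq_zero.1 this).resolve_left (rpow_pos_of_pos hx _).ne']

theorem stmt1 (f : ℝ → ℝ) (r₀ δ ω : ℝ) (hr : 0 < r₀) (hδ : 0 < δ)
    (hfpos : ∀ x, 0 < f x) (hf : DifferentiableAt ℝ f r₀)
    (hΩ : 0 < 1 - ω ^ 2 * f r₀ * r₀ ^ (-2 : ℝ)) :
    ¬ (deriv (fun r => r ^ δ * (1 - ω ^ 2 * f r * r ^ (-2 : ℝ))) r₀ = 0 ∧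
       deriv (fun r => f r * (1 - ω ^ 2 * f r * r ^ (-2 : ℝ))⁻¹) r₀ = 0) := by
  rintro ⟨hstat, hstatΩ⟩
  have hf' := hf.hasDerivAt
  have hg : HasDerivAt (fun r => 1 - ω ^ 2 * f r * r ^ (-2 : ℝ))
      (-(ω ^ 2 * deriv f r₀ * r₀ ^ (-2 : ℝ) - 2 * ω ^ 2 * f r₀ * r₀ ^ ((-2 : ℝ) - 1))) r₀ := by
    refine (((hf'.const_mul (ω ^ 2)).mul
      (hasDerivAt_rpow_const (p := (-2 : ℝ)) (Or.inl hr.ne'))).const_sub 1).congr_deriv ?_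
    ring
  have hfg := mul_eq_mul_of_deriv_mul_inv_eq_zero hf' hg hΩ.ne' hstatΩ
  have hrg := mul_eq_neg_mul_of_deriv_rpow_mul_eq_zero hr hg hstat
  have hlog : r₀ * deriv f r₀ = -δ * f r₀ := by
    apply mul_right_cancel₀ hΩ.ne'
    linear_combination r₀ * hfg + f r₀ * hrg
  have hrpow : r₀ ^ ((-2 : ℝ) - 1) * r₀ = r₀ ^ (-2 : ℝ) := by
    rw [← rpow_add_one hr.ne']; ring_nf
  have hrg' : r₀ * -(ω ^ 2 * deriv f r₀ * r₀ ^ (-2 : ℝ) - 2 * ω ^ 2 * f r₀ * r₀ ^ ((-2 : ℝ) - 1)) =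
      ω ^ 2 * f r₀ * r₀ ^ (-2 : ℝ) * (δ + 2) := by
    linear_combination (-(ω ^ 2) * r₀ ^ (-2 : ℝ)) * hlog + 2 * ω ^ 2 * f r₀ * hrpow
  have hrhs_nonneg : 0 ≤ ω ^ 2 * f r₀ * r₀ ^ (-2 : ℝ) * (δ + 2) := by
    have := hfpos r₀
    have := rpow_pos_of_pos hr (-2 : ℝ)
    positivity
  linarith [mul_pos hδ hΩ]
end

section
/- With F, f, h, μ, ω, δ, v_s² as in the master accretion problem, a point (r,n) in the domain satisfies ∂F/∂n (r,n) = 0 if and only if v_s²(n) = μ²/(μ² + f(r)·r^δ·n²). -/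
/-! The derivative in `n` factors as `2 h / (r^δ n³) · (n h' (μ² + f r^δ n²) - μ² h)` times the
nonzero constant `(1 - ω² f r⁻²)⁻¹`, and the prefactor is positive, so it vanishes exactly when the
bracket does, which is the stated identity after clearing denominators. -/

theorem hasDerivAt_sq_mul_add_div_sq {h : ℝ → ℝ} {h' a b K n : ℝ} (hh : HasDerivAt h h' n)
    (hK : K ≠ 0) (hn : n ≠ 0) :
    HasDerivAt (fun m => h m ^ 2 * (a + b / (K * m ^ 2)))
      (2 * h n / (K * n ^ 3) * (n * h' * (b + a * K * n ^ 2) - b * h n)) n := by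
  have hsq : HasDerivAt (fun m : ℝ => K * m ^ 2) (K * (2 * n)) n := by
    simpa using (hasDerivAt_pow 2 n).const_mul K
  have hdiv : HasDerivAt (fun m => a + b / (K * m ^ 2))
      (-(b * (K * (2 * n))) / (K * n ^ 2) ^ 2) n := by
    simpa using ((hasDerivAt_const n b).div hsq (by positivity)).const_add a
  refine ((hh.fun_pow 2).mul hdiv).congr_deriv ?_
  field_simp
  ring

theorem stmt5_general (f h : ℝ → ℝ) (μ ω δ : ℝ)
    (hfpos : ∀ x, 0 < f x)
    (hhpos : ∀ x, 0 < h x) (hhdiff : Differentiable ℝ h)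
    (r n : ℝ) (hr : 0 < r) (hn : 0 < n)
    (hΩ : 0 < 1 - ω ^ 2 * f r * r ^ (-2 : ℝ)) :
    deriv (fun m => (h m) ^ 2 * (f r + μ ^ 2 / (r ^ δ * m ^ 2)) *
        (1 - ω ^ 2 * f r * r ^ (-2 : ℝ))⁻¹) n = 0 ↔
      n * deriv h n / h n = μ ^ 2 / (μ ^ 2 + f r * r ^ δ * n ^ 2) := by
  have hK : 0 < r ^ δ := Real.rpow_pos_of_pos hr δ
  have hhn := hhpos n
  have hfr := hfpos r
  rw [((hasDerivAt_sq_mul_add_div_sq (hhdiff n).hasDerivAt hK.ne' hn.ne').mul_const _).deriv,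
    mul_eq_zero, or_iff_left (inv_ne_zero hΩ.ne'), mul_eq_zero, or_iff_right (by positivity),
    sub_eq_zero, div_eq_div_iff hhn.ne' (by positivity)]

theorem stmt5 (f h : ℝ → ℝ) (μ ω δ : ℝ) (hμ : μ ≠ 0) (hδ : 0 < δ)
    (hfpos : ∀ x, 0 < f x) (hfdiff : Differentiable ℝ f)
    (hhpos : ∀ x, 0 < h x) (hhdiff : Differentiable ℝ h)
    (r n : ℝ) (hr : 0 < r) (hn : 0 < n)
    (hΩ : 0 < 1 - ω ^ 2 * f r * r ^ (-2 : ℝ)) :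
    deriv (fun m => (h m) ^ 2 * (f r + μ ^ 2 / (r ^ δ * m ^ 2)) *
        (1 - ω ^ 2 * f r * r ^ (-2 : ℝ))⁻¹) n = 0 ↔
      n * deriv h n / h n = μ ^ 2 / (μ ^ 2 + f r * r ^ δ * n ^ 2) :=
  stmt5_general f h μ ω δ hfpos hhpos hhdiff r n hr hn hΩ
end

section
/- With F, Ω as in the master accretion problem, suppose at (r_c, n_c) both ∂F/∂r = 0 and ∂F/∂n = 0 hold, and (r^δ Ω^(-1))'(r_c) ≠ 0, (fΩ)'(r_c) ≠ 0. Then n_c² = (μ²/(r_c^δ Ω(r_c)^(-1))²)·(r^δ Ω^(-1))'(r_c)/(fΩ)'(r_c), i.e. n_c = |μ|·(r_c^δ Ω(r_c)^(-1))^(-1)·√((r^δ Ω^(-1))'(r_c)/(fΩ)'(r_c)). -/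
/-!
Writing `A = fΩ` and `B = r^δ Ω⁻¹`, the potential splits as `F(·, n) = h(n)² (A + μ²/(n² B))`, so
`∂F/∂r = h(n)² (A' - μ² B' / (n² B²))`. Since `h(n) ≠ 0`, a critical point in `r` forces
`A'(r_c) B(r_c)² n_c² = μ² B'(r_c)`, which is solved for `n_c²` and then for `n_c > 0`.
-/

open Real

/-- `invOmega f ω s` is `Ω(s)⁻¹`. -/
noncomputable def invOmega (f : ℝ → ℝ) (ω s : ℝ) : ℝ := 1 - ω ^ 2 * f s * s ^ (-2 : ℝ)

lemma differentiableAt_invOmega {f : ℝ → ℝ} {ω r : ℝ} (hf : DifferentiableAt ℝ f r)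
    (hr : r ≠ 0) : DifferentiableAt ℝ (invOmega f ω) r :=
  (differentiableAt_const _).sub
    (((differentiableAt_const _).mul hf).mul (differentiableAt_rpow_const_of_ne (-2) hr))

lemma deriv_mul_sq_eq_of_deriv_const_mul_add_mul_inv_eq_zero {A B : ℝ → ℝ} {r c k : ℝ}
    (hA : DifferentiableAt ℝ A r) (hB : DifferentiableAt ℝ B r) (hBr : B r ≠ 0) (hc : c ≠ 0)
    (hcrit : deriv (fun s => c * (A s + k * (B s)⁻¹)) r = 0) :
    deriv A r * B r ^ 2 = k * deriv B r := by
  have hderiv : HasDerivAt (fun s => c * (A s + k * (B s)⁻¹))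
      (c * (deriv A r + k * (-deriv B r / B r ^ 2))) r :=
    (hA.hasDerivAt.add ((hB.hasDerivAt.fun_inv hBr).const_mul k)).const_mul c
  rw [hderiv.deriv, mul_eq_zero, or_iff_right hc] at hcrit
  field_simp at hcrit
  linear_combination hcrit

lemma sq_eq_div_sq_mul_div_of_mul_sq_eq {a b B n μ : ℝ} (ha : a ≠ 0) (hB : B ≠ 0) (hn : n ≠ 0)
    (h : a * B ^ 2 = μ ^ 2 / n ^ 2 * b) : n ^ 2 = μ ^ 2 / B ^ 2 * (b / a) := by
  field_simp at h ⊢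
  linear_combination h

lemma eq_abs_div_mul_sqrt_of_sq_eq {n B μ q : ℝ} (hn : 0 ≤ n) (hB : 0 ≤ B)
    (hsq : n ^ 2 = μ ^ 2 / B ^ 2 * q) : n = |μ| / B * √q := by
  rw [← sqrt_sq hn, hsq, ← sq_abs μ, ← div_pow, sqrt_mul (sq_nonneg _),
    sqrt_sq (div_nonneg (abs_nonneg μ) hB)]

theorem stmt7_general (f h : ℝ → ℝ) (μ ω δ : ℝ) (hhpos : ∀ x, 0 < h x)
    (r_c n_c : ℝ) (hr : 0 < r_c) (hn : 0 < n_c)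
    (hf : DifferentiableAt ℝ f r_c)
    (hΩ : 0 < 1 - ω ^ 2 * f r_c * r_c ^ (-2 : ℝ))
    (hcr : deriv (fun s => (h n_c) ^ 2 * (f s + μ ^ 2 / (s ^ δ * n_c ^ 2)) *
        (1 - ω ^ 2 * f s * s ^ (-2 : ℝ))⁻¹) r_c = 0)
    (hD2 : deriv (fun s => f s * (1 - ω ^ 2 * f s * s ^ (-2 : ℝ))⁻¹) r_c ≠ 0) :
    n_c ^ 2 = μ ^ 2 / (r_c ^ δ * (1 - ω ^ 2 * f r_c * r_c ^ (-2 : ℝ))) ^ 2 *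
        (deriv (fun s => s ^ δ * (1 - ω ^ 2 * f s * s ^ (-2 : ℝ))) r_c /
          deriv (fun s => f s * (1 - ω ^ 2 * f s * s ^ (-2 : ℝ))⁻¹) r_c) ∧
      n_c = |μ| / (r_c ^ δ * (1 - ω ^ 2 * f r_c * r_c ^ (-2 : ℝ))) *
        Real.sqrt (deriv (fun s => s ^ δ * (1 - ω ^ 2 * f s * s ^ (-2 : ℝ))) r_c /
          deriv (fun s => f s * (1 - ω ^ 2 * f s * s ^ (-2 : ℝ))⁻¹) r_c) := by
  have hG : DifferentiableAt ℝ (invOmega f ω) r_c := differentiableAt_invOmega hf hr.ne'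
  have hB : 0 < r_c ^ δ * invOmega f ω r_c := mul_pos (rpow_pos_of_pos hr δ) hΩ
  have hsplit : (fun s => h n_c ^ 2 * (f s + μ ^ 2 / (s ^ δ * n_c ^ 2)) * (invOmega f ω s)⁻¹) =
      fun s => h n_c ^ 2 *
        (f s * (invOmega f ω s)⁻¹ + μ ^ 2 / n_c ^ 2 * (s ^ δ * invOmega f ω s)⁻¹) := by
    funext s
    ring
  have hcrit := deriv_mul_sq_eq_of_deriv_const_mul_add_mul_inv_eq_zero
    (hf.mul (hG.inv hΩ.ne')) ((differentiableAt_rpow_const_of_ne δ hr.ne').mul hG) hB.ne'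
    (pow_ne_zero 2 (hhpos n_c).ne') (hsplit ▸ hcr)
  have hsq := sq_eq_div_sq_mul_div_of_mul_sq_eq hD2 hB.ne' hn.ne' hcrit
  exact ⟨hsq, eq_abs_div_mul_sqrt_of_sq_eq hn.le hB.le hsq⟩

theorem stmt7 (f h : ℝ → ℝ) (μ ω δ : ℝ) (hμ : μ ≠ 0) (hδ : 0 < δ)
    (hfpos : ∀ x, 0 < f x) (hhpos : ∀ x, 0 < h x) (hhdiff : Differentiable ℝ h)
    (r_c n_c : ℝ) (hr : 0 < r_c) (hn : 0 < n_c)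
    (hf : DifferentiableAt ℝ f r_c)
    (hΩ : 0 < 1 - ω ^ 2 * f r_c * r_c ^ (-2 : ℝ))
    (hcr : deriv (fun s => (h n_c) ^ 2 * (f s + μ ^ 2 / (s ^ δ * n_c ^ 2)) *
        (1 - ω ^ 2 * f s * s ^ (-2 : ℝ))⁻¹) r_c = 0)
    (hcn : deriv (fun m => (h m) ^ 2 * (f r_c + μ ^ 2 / (r_c ^ δ * m ^ 2)) *
        (1 - ω ^ 2 * f r_c * r_c ^ (-2 : ℝ))⁻¹) n_c = 0)
    (hD1 : deriv (fun s => s ^ δ * (1 - ω ^ 2 * f s * s ^ (-2 : ℝ))) r_c ≠ 0)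
    (hD2 : deriv (fun s => f s * (1 - ω ^ 2 * f s * s ^ (-2 : ℝ))⁻¹) r_c ≠ 0) :
    n_c ^ 2 = μ ^ 2 / (r_c ^ δ * (1 - ω ^ 2 * f r_c * r_c ^ (-2 : ℝ))) ^ 2 *
        (deriv (fun s => s ^ δ * (1 - ω ^ 2 * f s * s ^ (-2 : ℝ))) r_c /
          deriv (fun s => f s * (1 - ω ^ 2 * f s * s ^ (-2 : ℝ))⁻¹) r_c) ∧
      n_c = |μ| / (r_c ^ δ * (1 - ω ^ 2 * f r_c * r_c ^ (-2 : ℝ))) *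
        Real.sqrt (deriv (fun s => s ^ δ * (1 - ω ^ 2 * f s * s ^ (-2 : ℝ))) r_c /
          deriv (fun s => f s * (1 - ω ^ 2 * f s * s ^ (-2 : ℝ))⁻¹) r_c) :=
  stmt7_general f h μ ω δ hhpos r_c n_c hr hn hf hΩ hcr hD2
end

section
/- Take h(n) = C·n^(γ-1) with C > 0 and γ - 1 = 1/(D-1) (ideal photon gas in spacetime dimension D ≥ 3), δ = 2(D-2), and F(r,n) := h(n)²·(f(r) + μ²/(r^δ n²))·(1 - ω²f(r)r^(-2))^(-1). If (r_c, n_c) with r_c > 0, n_c > 0, 1 - ω²f(r_c)r_c^(-2) > 0 is a critical point of F (both partial derivatives vanish), then (f·r^(-2))'(r_c) = 0. -/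
/-! Write `A = μ² / (r^δ n²)` and `Ω = 1 - ω² f r⁻²`. The `n`-equation says `γ (f + A) = A`,
i.e. `f = (D - 2) A`, so `δ A = 2 f`. Hence the radial derivative of `f + A` is
`f' - 2 f / r = r² (f r⁻²)'`, and the `r`-equation factors as
`(f r⁻²)' · (Ω + ω² (f + A) r⁻²) = 0`, whose second factor is positive. -/

theorem HasDerivAt.mul_rpow_const_of_pos {f : ℝ → ℝ} {f' r : ℝ} (hf : HasDerivAt f f' r)
    (hr : 0 < r) (p : ℝ) :
    HasDerivAt (fun s => f s * s ^ p) ((f' + p * f r / r) * r ^ p) r := by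
  refine (hf.mul (Real.hasDerivAt_rpow_const (Or.inl hr.ne'))).congr_deriv ?_
  rw [Real.rpow_sub hr, Real.rpow_one]
  field_simp

theorem hasDerivAt_const_div_rpow_mul_const (a b δ : ℝ) {r : ℝ} (hr : 0 < r) (hb : b ≠ 0) :
    HasDerivAt (fun s => a / (s ^ δ * b)) (-δ * (a / (r ^ δ * b)) / r) r := by
  have hpow := (Real.hasDerivAt_rpow_const (p := δ) (Or.inl hr.ne')).mul_const b
  have hrδ : r ^ δ ≠ 0 := (Real.rpow_pos_of_pos hr δ).ne'
  refine ((hasDerivAt_const r a).fun_div hpow (mul_ne_zero hrδ hb)).congr_deriv ?_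
  rw [Real.rpow_sub hr, Real.rpow_one]
  field_simp
  ring

theorem mul_eq_mul_of_deriv_const_mul_mul_inv_eq_zero {P Q : ℝ → ℝ} {P' Q' k x : ℝ}
    (hP : HasDerivAt P P' x) (hQ : HasDerivAt Q Q' x) (hk : k ≠ 0) (hQx : Q x ≠ 0)
    (hcrit : deriv (fun s => k * P s * (Q s)⁻¹) x = 0) :
    P' * Q x = P x * Q' := by
  rw [((hP.const_mul k).fun_mul (hQ.fun_inv hQx)).deriv] at hcrit
  field_simp at hcrit
  exact mul_left_cancel₀ hk (by linear_combination hcrit)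

theorem hasDerivAt_sq_const_mul_rpow_mul_add_div (C γ K a b c : ℝ) {n : ℝ} (hn : 0 < n)
    (hb : b ≠ 0) :
    HasDerivAt (fun m => (C * m ^ γ) ^ 2 * (K + a / (b * m ^ 2)) * c)
      (2 * (C * n ^ γ) ^ 2 / n * (γ * (K + a / (b * n ^ 2)) - a / (b * n ^ 2)) * c) n := by
  have hpow := ((Real.hasDerivAt_rpow_const (p := γ) (Or.inl hn.ne')).const_mul C).fun_pow 2
  have hinv := (hasDerivAt_const n a).fun_div ((hasDerivAt_pow 2 n).const_mul b) (by positivity)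
  refine ((hpow.fun_mul (hinv.const_add K)).mul_const c).congr_deriv ?_
  rw [Real.rpow_sub hn, Real.rpow_one]
  field_simp
  ring

theorem mul_add_div_sq_eq_div_sq_of_deriv_eq_zero {C γ K a b c n : ℝ} (hC : C ≠ 0) (hn : 0 < n)
    (hb : b ≠ 0) (hc : c ≠ 0)
    (hcrit : deriv (fun m => (C * m ^ γ) ^ 2 * (K + a / (b * m ^ 2)) * c) n = 0) :
    γ * (K + a / (b * n ^ 2)) = a / (b * n ^ 2) := by
  rw [(hasDerivAt_sq_const_mul_rpow_mul_add_div C γ K a b c hn hb).deriv] at hcrit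
  have : 2 * (C * n ^ γ) ^ 2 / n ≠ 0 := by
    have := Real.rpow_pos_of_pos hn γ
    positivity
  simpa [this, hc, sub_eq_zero] using hcrit

theorem deriv_mul_rpow_neg_two_eq_zero_of_critical {f : ℝ → ℝ} {r : ℝ} (a b δ k ω : ℝ)
    (hr : 0 < r) (hb : b ≠ 0) (hf : DifferentiableAt ℝ f r) (hk : k ≠ 0)
    (hΩ : 0 < 1 - ω ^ 2 * f r * r ^ (-2 : ℝ))
    (hnonneg : 0 ≤ f r + a / (r ^ δ * b)) (hbalance : δ * (a / (r ^ δ * b)) = 2 * f r)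
    (hcrit : deriv (fun s => k * (f s + a / (s ^ δ * b)) *
      (1 - ω ^ 2 * f s * s ^ (-2 : ℝ))⁻¹) r = 0) :
    deriv (fun s => f s * s ^ (-2 : ℝ)) r = 0 := by
  set A := a / (r ^ δ * b)
  have hg := hf.hasDerivAt.mul_rpow_const_of_pos hr (-2)
  have hΩ' : HasDerivAt (fun s => 1 - ω ^ 2 * f s * s ^ (-2 : ℝ))
      (-(ω ^ 2 * ((deriv f r + -2 * f r / r) * r ^ (-2 : ℝ)))) r := by
    simpa only [mul_assoc] using (hg.const_mul (ω ^ 2)).const_sub 1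
  have hcross := mul_eq_mul_of_deriv_const_mul_mul_inv_eq_zero
    (hf.hasDerivAt.fun_add (hasDerivAt_const_div_rpow_mul_const a b δ hr hb)) hΩ' hk hΩ.ne' hcrit
  have hpos : 0 < (1 - ω ^ 2 * f r * r ^ (-2 : ℝ)) + ω ^ 2 * (f r + A) * r ^ (-2 : ℝ) := by
    have := Real.rpow_pos_of_pos hr (-2)
    exact add_pos_of_pos_of_nonneg hΩ (by positivity)
  have hfactor : (deriv f r + -2 * f r / r) *
      ((1 - ω ^ 2 * f r * r ^ (-2 : ℝ)) + ω ^ 2 * (f r + A) * r ^ (-2 : ℝ)) = 0 := by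
    linear_combination hcross + (1 - ω ^ 2 * f r * r ^ (-2 : ℝ)) / r * hbalance
  rw [hg.deriv, (mul_eq_zero.mp hfactor).resolve_right hpos.ne', zero_mul]

theorem stmt8_general (f : ℝ → ℝ) (C μ ω : ℝ) (D : ℕ) (hD : 3 ≤ D) (hC : 0 < C)
    (r_c n_c : ℝ) (hr : 0 < r_c) (hn : 0 < n_c)
    (hf : DifferentiableAt ℝ f r_c)
    (hΩ : 0 < 1 - ω ^ 2 * f r_c * r_c ^ (-2 : ℝ))
    (hcr : deriv (fun s => (C * n_c ^ (((D : ℝ) - 1)⁻¹)) ^ 2 *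
        (f s + μ ^ 2 / (s ^ (2 * ((D : ℝ) - 2)) * n_c ^ 2)) *
        (1 - ω ^ 2 * f s * s ^ (-2 : ℝ))⁻¹) r_c = 0)
    (hcn : deriv (fun m => (C * m ^ (((D : ℝ) - 1)⁻¹)) ^ 2 *
        (f r_c + μ ^ 2 / (r_c ^ (2 * ((D : ℝ) - 2)) * m ^ 2)) *
        (1 - ω ^ 2 * f r_c * r_c ^ (-2 : ℝ))⁻¹) n_c = 0) :
    deriv (fun s => f s * s ^ (-2 : ℝ)) r_c = 0 := by
  have hD' : (3 : ℝ) ≤ D := by exact_mod_cast hD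
  have hrδ : 0 < r_c ^ (2 * ((D : ℝ) - 2)) := Real.rpow_pos_of_pos hr _
  set A := μ ^ 2 / (r_c ^ (2 * ((D : ℝ) - 2)) * n_c ^ 2)
  have hA : 0 ≤ A := by positivity
  have hγ : ((D : ℝ) - 1)⁻¹ * (f r_c + A) = A :=
    mul_add_div_sq_eq_div_sq_of_deriv_eq_zero hC.ne' hn hrδ.ne' (inv_pos.mpr hΩ).ne' hcn
  have hf_eq : f r_c = ((D : ℝ) - 2) * A := by
    rw [inv_mul_eq_iff_eq_mul₀ (by linarith)] at hγ
    linarith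
  refine deriv_mul_rpow_neg_two_eq_zero_of_critical (μ ^ 2) (n_c ^ 2) (2 * ((D : ℝ) - 2)) _ ω hr
    (by positivity) hf (by positivity) hΩ ?_ ?_ hcr
  · rw [hf_eq]; nlinarith
  · rw [hf_eq]; ring

theorem stmt8 (f : ℝ → ℝ) (C μ ω : ℝ) (D : ℕ) (hD : 3 ≤ D) (hC : 0 < C) (hμ : μ ≠ 0)
    (hfpos : ∀ x, 0 < f x)
    (r_c n_c : ℝ) (hr : 0 < r_c) (hn : 0 < n_c)
    (hf : DifferentiableAt ℝ f r_c)
    (hΩ : 0 < 1 - ω ^ 2 * f r_c * r_c ^ (-2 : ℝ))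
    (hcr : deriv (fun s => (C * n_c ^ (((D : ℝ) - 1)⁻¹)) ^ 2 *
        (f s + μ ^ 2 / (s ^ (2 * ((D : ℝ) - 2)) * n_c ^ 2)) *
        (1 - ω ^ 2 * f s * s ^ (-2 : ℝ))⁻¹) r_c = 0)
    (hcn : deriv (fun m => (C * m ^ (((D : ℝ) - 1)⁻¹)) ^ 2 *
        (f r_c + μ ^ 2 / (r_c ^ (2 * ((D : ℝ) - 2)) * m ^ 2)) *
        (1 - ω ^ 2 * f r_c * r_c ^ (-2 : ℝ))⁻¹) n_c = 0) :
    deriv (fun s => f s * s ^ (-2 : ℝ)) r_c = 0 :=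
  stmt8_general f C μ ω D hD hC r_c n_c hr hn hf hΩ hcr hcn
end

section
/- In the setting of the photon gas accretion problem (h(n) = C·n^(1/(D-1)), δ = 2(D-2), D ≥ 3), if (r_c, n_c) is a critical point of F, then n_c = |μ|·√(δ/(r_c^(δ+1)·f'(r_c))), and this value is independent of the rotation parameter ω. -/
/-!
Criticality in `n` only involves the factor `n ^ (2/(D-1)) * (f + μ²/(r^δ n²))`, and gives
`δ μ² = 2 f(r_c) r_c^δ n_c²`. Substituting this into the quotient rule for `∂_r F = 0`, the
condition factors as `(r_c f'(r_c) - 2 f(r_c)) * (1 + ω² r_c⁻² μ²/(r_c^δ n_c²)) = 0`; the second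
factor is positive, so `r_c f'(r_c) = 2 f(r_c)` whatever `ω` is, and solving the first relation
for `n_c` gives the formula.
-/

theorem mul_eq_mul_of_deriv_mul_inv_eq_zero_s9 {V W : ℝ → ℝ} {A V' W' r : ℝ}
    (hA : A ≠ 0) (hV : HasDerivAt V V' r) (hW : HasDerivAt W W' r) (hWr : W r ≠ 0)
    (h : deriv (fun s => A * V s * (W s)⁻¹) r = 0) : V' * W r = V r * W' := by
  have hd : HasDerivAt (fun s => A * V s * (W s)⁻¹)
      (A * V' * (W r)⁻¹ + A * V r * (-W' / W r ^ 2)) r :=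
    (hV.const_mul A).mul (hW.inv hWr)
  rw [hd.deriv] at h
  field_simp at h
  rw [mul_zero, mul_eq_zero] at h
  linear_combination h.resolve_left hA

theorem mul_sq_eq_of_deriv_rpow_mul_add_div_sq_eq_zero {C p a b K m : ℝ} (hC : C ≠ 0)
    (hK : K ≠ 0) (hm : 0 < m)
    (h : deriv (fun x => (C * x ^ p) ^ 2 * (a + b / x ^ 2) * K) m = 0) :
    p * a * m ^ 2 = (1 - p) * b := by
  have hd : HasDerivAt (fun x => (C * x ^ p) ^ 2 * (a + b / x ^ 2) * K)
      (2 * C ^ 2 * K * (m ^ p) ^ 2 / m ^ 3 * (p * a * m ^ 2 - (1 - p) * b)) m := by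
    refine ((((Real.hasDerivAt_rpow_const (Or.inl hm.ne')).const_mul C).pow 2).mul
      ((hasDerivAt_const m b).div (hasDerivAt_pow 2 m) (by positivity) |>.const_add a)
      |>.mul_const K).congr_deriv ?_
    simp only [Pi.pow_apply, Pi.div_apply, Real.rpow_sub_one hm.ne']
    field_simp
    ring
  rw [hd.deriv] at h
  have hmp : 0 < m ^ p := Real.rpow_pos_of_pos hm p
  simpa [hC, hK, hm.ne', hmp.ne', sub_eq_zero] using h

theorem deriv_mul_eq_two_mul_of_deriv_mul_inv_eq_zero {f : ℝ → ℝ} {A c δ ω r : ℝ}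
    (hA : A ≠ 0) (hr : 0 < r) (hc : 0 ≤ c) (hf : DifferentiableAt ℝ f r)
    (hW : 1 - ω ^ 2 * f r * r ^ (-2 : ℝ) ≠ 0) (hδ : δ * (c / r ^ δ) = 2 * f r)
    (h : deriv (fun s => A * (f s + c / s ^ δ) * (1 - ω ^ 2 * f s * s ^ (-2 : ℝ))⁻¹) r = 0) :
    deriv f r * r = 2 * f r := by
  have hV : HasDerivAt (fun s => f s + c / s ^ δ) ((deriv f r * r - 2 * f r) / r) r := by
    refine (hf.hasDerivAt.add ((hasDerivAt_const r c).div
      (Real.hasDerivAt_rpow_const (Or.inl hr.ne')) (by positivity))).congr_deriv ?_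
    rw [Real.rpow_sub_one hr.ne', ← hδ]
    field_simp
    ring
  have hW' : HasDerivAt (fun s => 1 - ω ^ 2 * f s * s ^ (-2 : ℝ))
      (-(ω ^ 2 * r ^ (-2 : ℝ) * ((deriv f r * r - 2 * f r) / r))) r := by
    refine ((hf.hasDerivAt.const_mul (ω ^ 2)).mul
      (Real.hasDerivAt_rpow_const (Or.inl hr.ne'))).const_sub 1 |>.congr_deriv ?_
    rw [Real.rpow_sub_one hr.ne']
    field_simp
    ring
  have key := mul_eq_mul_of_deriv_mul_inv_eq_zero_s9 hA hV hW' hW h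
  have hq : 0 ≤ c / r ^ δ := by positivity
  generalize c / r ^ δ = q at hq key
  have hfactor : (deriv f r * r - 2 * f r) * (1 + ω ^ 2 * r ^ (-2 : ℝ) * q) = 0 := by
    field_simp at key
    linear_combination key
  have hpos : 0 < 1 + ω ^ 2 * r ^ (-2 : ℝ) * q := by positivity
  linarith [(mul_eq_zero.mp hfactor).resolve_right hpos.ne']

theorem eq_abs_mul_sqrt_of_sq_eq {n μ q : ℝ} (hn : 0 ≤ n) (h : n ^ 2 = μ ^ 2 * q) :
    n = |μ| * √q := by
  rw [← Real.sqrt_sq hn, h, Real.sqrt_mul (sq_nonneg μ), Real.sqrt_sq_eq_abs]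

theorem stmt9_general (f : ℝ → ℝ) (C μ ω : ℝ) (D : ℕ) (hD : 3 ≤ D) (hC : 0 < C)
    (r_c n_c : ℝ) (hr : 0 < r_c) (hn : 0 < n_c)
    (hf : DifferentiableAt ℝ f r_c) (hf' : 0 < deriv f r_c)
    (hΩ : 0 < 1 - ω ^ 2 * f r_c * r_c ^ (-2 : ℝ))
    (hcr : deriv (fun s => (C * n_c ^ (((D : ℝ) - 1)⁻¹)) ^ 2 *
        (f s + μ ^ 2 / (s ^ (2 * ((D : ℝ) - 2)) * n_c ^ 2)) *
        (1 - ω ^ 2 * f s * s ^ (-2 : ℝ))⁻¹) r_c = 0)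
    (hcn : deriv (fun m => (C * m ^ (((D : ℝ) - 1)⁻¹)) ^ 2 *
        (f r_c + μ ^ 2 / (r_c ^ (2 * ((D : ℝ) - 2)) * m ^ 2)) *
        (1 - ω ^ 2 * f r_c * r_c ^ (-2 : ℝ))⁻¹) n_c = 0) :
    n_c = |μ| * Real.sqrt (2 * ((D : ℝ) - 2) /
      (r_c ^ (2 * ((D : ℝ) - 2) + 1) * deriv f r_c)) := by
  have hD1 : (D : ℝ) - 1 ≠ 0 := by
    have : (3 : ℝ) ≤ D := by exact_mod_cast hD
    linarith
  simp only [div_mul_eq_div_div] at hcn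
  simp only [div_mul_eq_div_div_swap] at hcr
  have hn_crit : 2 * ((D : ℝ) - 2) * μ ^ 2 = 2 * f r_c * r_c ^ (2 * ((D : ℝ) - 2)) * n_c ^ 2 := by
    have h := mul_sq_eq_of_deriv_rpow_mul_add_div_sq_eq_zero hC.ne' (inv_ne_zero hΩ.ne') hn hcn
    field_simp at h
    linear_combination -2 * h
  have hr_crit : deriv f r_c * r_c = 2 * f r_c :=
    deriv_mul_eq_two_mul_of_deriv_mul_inv_eq_zero (by positivity) hr (by positivity) hf hΩ.ne'
      (by field_simp; linear_combination hn_crit / 2) hcr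
  apply eq_abs_mul_sqrt_of_sq_eq hn.le
  rw [Real.rpow_add_one hr.ne']
  field_simp
  linear_combination n_c ^ 2 * r_c ^ (2 * ((D : ℝ) - 2)) * hr_crit - hn_crit

theorem stmt9 (f : ℝ → ℝ) (C μ ω : ℝ) (D : ℕ) (hD : 3 ≤ D) (hC : 0 < C) (hμ : μ ≠ 0)
    (hfpos : ∀ x, 0 < f x)
    (r_c n_c : ℝ) (hr : 0 < r_c) (hn : 0 < n_c)
    (hf : DifferentiableAt ℝ f r_c) (hf' : 0 < deriv f r_c)
    (hΩ : 0 < 1 - ω ^ 2 * f r_c * r_c ^ (-2 : ℝ))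
    (hcr : deriv (fun s => (C * n_c ^ (((D : ℝ) - 1)⁻¹)) ^ 2 *
        (f s + μ ^ 2 / (s ^ (2 * ((D : ℝ) - 2)) * n_c ^ 2)) *
        (1 - ω ^ 2 * f s * s ^ (-2 : ℝ))⁻¹) r_c = 0)
    (hcn : deriv (fun m => (C * m ^ (((D : ℝ) - 1)⁻¹)) ^ 2 *
        (f r_c + μ ^ 2 / (r_c ^ (2 * ((D : ℝ) - 2)) * m ^ 2)) *
        (1 - ω ^ 2 * f r_c * r_c ^ (-2 : ℝ))⁻¹) n_c = 0) :
    n_c = |μ| * Real.sqrt (2 * ((D : ℝ) - 2) /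
      (r_c ^ (2 * ((D : ℝ) - 2) + 1) * deriv f r_c)) :=
  stmt9_general f C μ ω D hD hC r_c n_c hr hn hf hf' hΩ hcr hcn
end

section
/- Let v_s² = 1/(D-1) with D ≥ 3, δ = 2(D-2), f positive and differentiable, ω ∈ ℝ, Ω(r) := (1 - ω²f(r)r^(-2))^(-1) with Ω > 0, and suppose (fΩ)'(r) ≠ 0. Then the critical-radius function ℱ(r) := v_s²·[1 + ((r^δ Ω^(-1))'(r)/(r^δ Ω^(-1)(r)))·(f(r)Ω(r)/(fΩ)'(r))] - 1 satisfies ℱ(r) = -(1/(δ+2))·(f(r)Ω(r)/(fΩ)'(r))·((δ + 2ω²f(r)r^(-2))/(f(r)r^(-2)·(1 - ω²f(r)r^(-2))))·(f·r^(-2))'(r). -/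
/-!
Everything is a statement about logarithmic derivatives. Put `h = f r⁻²`, `ℓ = (log h)'` and
`γ = (log Ω⁻¹)' = -ω² h' Ω`. Then `(log fΩ)' = ℓ + 2/r - γ` and `(log r^δ Ω⁻¹)' = δ/r + γ`, so
`ℱ` has numerator `v_s² (ℓ + (δ + 2)/r) - ℓ - 2/r + γ`. Because `v_s² = 2/(δ + 2)` the `1/r`
terms cancel, and what is left, `γ - δℓ/(δ + 2)`, is a multiple of `ℓ`, i.e. of `h'`.
-/

section LogDeriv

variable {𝕜 𝕜' : Type*} [NontriviallyNormedField 𝕜] [NontriviallyNormedField 𝕜']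
  [NormedAlgebra 𝕜 𝕜'] {f g : 𝕜 → 𝕜'} {x : 𝕜}

theorem deriv_eq_mul_logDeriv (hf : f x ≠ 0) : deriv f x = f x * logDeriv f x := by
  rw [logDeriv_apply, mul_div_cancel₀ _ hf]

theorem logDeriv_mul_inv (hf : f x ≠ 0) (hg : g x ≠ 0) (hdf : DifferentiableAt 𝕜 f x)
    (hdg : DifferentiableAt 𝕜 g x) :
    logDeriv (fun s => f s * (g s)⁻¹) x = logDeriv f x - logDeriv g x := by
  simpa only [div_eq_mul_inv] using logDeriv_div x hf hg hdf hdg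

theorem logDeriv_const_sub_mul (a c : 𝕜') (hf : DifferentiableAt 𝕜 f x) :
    logDeriv (fun s => a - c * f s) x = -(c * deriv f x) / (a - c * f x) := by
  rw [logDeriv_apply, deriv_const_sub, deriv_const_mul _ hf]

end LogDeriv

namespace Real

variable {f : ℝ → ℝ} {x : ℝ}

theorem logDeriv_rpow_const (hx : 0 < x) (p : ℝ) :
    logDeriv (fun s => s ^ p) x = p / x := by
  rw [logDeriv_apply, deriv_rpow_const, rpow_sub_one hx.ne']
  field_simp [(rpow_pos_of_pos hx p).ne']

theorem logDeriv_mul_rpow_const (hx : 0 < x) (hf : f x ≠ 0) (hdf : DifferentiableAt ℝ f x)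
    (p : ℝ) : logDeriv (fun s => f s * s ^ p) x = logDeriv f x + p / x := by
  rw [logDeriv_mul x hf (rpow_pos_of_pos hx p).ne' hdf
    (differentiableAt_rpow_const_of_ne p hx.ne'), logDeriv_rpow_const hx]

theorem logDeriv_rpow_const_mul (hx : 0 < x) (hf : f x ≠ 0) (hdf : DifferentiableAt ℝ f x)
    (p : ℝ) : logDeriv (fun s => s ^ p * f s) x = p / x + logDeriv f x := by
  rw [logDeriv_mul x (rpow_pos_of_pos hx p).ne' hf (differentiableAt_rpow_const_of_ne p hx.ne')
    hdf, logDeriv_rpow_const hx]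

end Real

theorem critical_radius_identity {δ r F x ℓ γ ω : ℝ} (hδ : δ + 2 ≠ 0) (hF : F ≠ 0) (hx : x ≠ 0)
    (hG : 1 - ω ^ 2 * F * x ≠ 0) (hγ : γ = -(ω ^ 2 * (F * x * ℓ)) / (1 - ω ^ 2 * F * x))
    (hL : ℓ + 2 / r - γ ≠ 0) :
    2 / (δ + 2) * (1 + (δ / r + γ) * (ℓ + 2 / r - γ)⁻¹) - 1 =
      -(1 / (δ + 2)) * (ℓ + 2 / r - γ)⁻¹ *
        ((δ + 2 * ω ^ 2 * F * x) / (F * x * (1 - ω ^ 2 * F * x))) * (F * x * ℓ) := by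
  set L := ℓ + 2 / r - γ with hL_def
  have numerator : 2 / (δ + 2) * (L + (δ / r + γ)) - L =
      -(1 / (δ + 2)) * ((δ + 2 * ω ^ 2 * F * x) / (F * x * (1 - ω ^ 2 * F * x))) * (F * x * ℓ) := by
    rw [hL_def, hγ]
    field_simp
    ring
  calc _ = (2 / (δ + 2) * (L + (δ / r + γ)) - L) * L⁻¹ := by field_simp
    _ = _ := by rw [numerator]; ring

theorem stmt14 (f : ℝ → ℝ) (ω : ℝ) (D : ℕ) (hD : 3 ≤ D)
    (hfpos : ∀ x, 0 < f x)
    (r : ℝ) (hr : 0 < r) (hf : DifferentiableAt ℝ f r)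
    (hΩ : 0 < 1 - ω ^ 2 * f r * r ^ (-2 : ℝ))
    (hD2 : deriv (fun s => f s * (1 - ω ^ 2 * f s * s ^ (-2 : ℝ))⁻¹) r ≠ 0) :
    ((D : ℝ) - 1)⁻¹ *
        (1 + deriv (fun s => s ^ (2 * ((D : ℝ) - 2)) *
            (1 - ω ^ 2 * f s * s ^ (-2 : ℝ))) r /
          (r ^ (2 * ((D : ℝ) - 2)) * (1 - ω ^ 2 * f r * r ^ (-2 : ℝ))) *
          (f r * (1 - ω ^ 2 * f r * r ^ (-2 : ℝ))⁻¹ /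
            deriv (fun s => f s * (1 - ω ^ 2 * f s * s ^ (-2 : ℝ))⁻¹) r)) - 1 =
      -(1 / (2 * ((D : ℝ) - 2) + 2)) *
        (f r * (1 - ω ^ 2 * f r * r ^ (-2 : ℝ))⁻¹ /
          deriv (fun s => f s * (1 - ω ^ 2 * f s * s ^ (-2 : ℝ))⁻¹) r) *
        ((2 * ((D : ℝ) - 2) + 2 * ω ^ 2 * f r * r ^ (-2 : ℝ)) /
          (f r * r ^ (-2 : ℝ) * (1 - ω ^ 2 * f r * r ^ (-2 : ℝ)))) *
        deriv (fun s => f s * s ^ (-2 : ℝ)) r := by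
  set δ : ℝ := 2 * ((D : ℝ) - 2)
  set ℓ := logDeriv (fun s => f s * s ^ (-2 : ℝ)) r with hℓ_def
  set γ := logDeriv (fun s => 1 - ω ^ 2 * f s * s ^ (-2 : ℝ)) r with hγ_def
  have hfr : f r ≠ 0 := (hfpos r).ne'
  have hx : r ^ (-2 : ℝ) ≠ 0 := (Real.rpow_pos_of_pos hr _).ne'
  have hdh : DifferentiableAt ℝ (fun s => f s * s ^ (-2 : ℝ)) r := by
    fun_prop (disch := exact hr.ne')
  have hdG : DifferentiableAt ℝ (fun s => 1 - ω ^ 2 * f s * s ^ (-2 : ℝ)) r := by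
    fun_prop (disch := exact hr.ne')
  have hh' : deriv (fun s => f s * s ^ (-2 : ℝ)) r = f r * r ^ (-2 : ℝ) * ℓ :=
    deriv_eq_mul_logDeriv (mul_ne_zero hfr hx)
  have hγ : γ = -(ω ^ 2 * (f r * r ^ (-2 : ℝ) * ℓ)) / (1 - ω ^ 2 * f r * r ^ (-2 : ℝ)) := by
    simp only [hγ_def, mul_assoc, logDeriv_const_sub_mul _ _ hdh, hh']
  have hT : deriv (fun s => s ^ δ * (1 - ω ^ 2 * f s * s ^ (-2 : ℝ))) r /
      (r ^ δ * (1 - ω ^ 2 * f r * r ^ (-2 : ℝ))) = δ / r + γ :=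
    Real.logDeriv_rpow_const_mul hr hΩ.ne' hdG δ
  have hΩ_div : f r * (1 - ω ^ 2 * f r * r ^ (-2 : ℝ))⁻¹ /
      deriv (fun s => f s * (1 - ω ^ 2 * f s * s ^ (-2 : ℝ))⁻¹) r = (ℓ + 2 / r - γ)⁻¹ := by
    rw [← inv_div, ← logDeriv_apply, logDeriv_mul_inv hfr hΩ.ne' hf hdG, hℓ_def,
      Real.logDeriv_mul_rpow_const hr hfr hf]
    ring
  have hL : ℓ + 2 / r - γ ≠ 0 := by
    have h := div_ne_zero (mul_ne_zero hfr (inv_ne_zero hΩ.ne')) hD2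
    rwa [hΩ_div, ne_eq, inv_eq_zero] at h
  have hD' : (3 : ℝ) ≤ D := by exact_mod_cast hD
  have hδ : δ + 2 = 2 * ((D : ℝ) - 1) := by ring
  have hδ_pos : 0 < δ + 2 := by linarith
  have hv : ((D : ℝ) - 1)⁻¹ = 2 / (δ + 2) := by rw [hδ, div_mul_cancel_left₀ two_ne_zero]
  rw [hv, hT, hΩ_div, hh']
  exact critical_radius_identity hδ_pos.ne' hfr hx hΩ.ne' hγ hL
end

section
/- Let f be positive and differentiable at r₀ > 0, δ > 0, ω ∈ ℝ with 1 - ω²f(r₀)r₀^(-2) > 0, and suppose (f·r^δ)'(r₀) = 0 where δ > 0. Then (r^δ·Ω^(-1))'(r₀) = r₀^(δ-1)·(δ + 2ω²f(r₀)r₀^(-2)) where Ω^(-1)(r) := 1 - ω²f(r)r^(-2); in particular this derivative is strictly positive. -/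
/-!
At a critical point of `f r ^ δ` one has `f' r₀ = -δ f r₀ / r₀`, hence
`(f r ^ (-2))' (r₀) = -(2 + δ) f r₀ r₀ ^ (-3)`; the product rule for `r ^ δ Ω⁻¹` then leaves
`r₀ ^ (δ - 1) (δ + 2 ω² f r₀ r₀ ^ (-2))`, which is positive since `δ > 0` and `f > 0`.
-/

variable {f : ℝ → ℝ} {f' δ x : ℝ}

lemma rpow_eq_rpow_sub_one_mul (hx : x ≠ 0) (y : ℝ) : x ^ y = x ^ (y - 1) * x := by
  rw [← Real.rpow_add_one hx, sub_add_cancel]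

lemma deriv_mul_rpow_eq_zero_iff (hx : 0 < x) (hf : HasDerivAt f f' x) :
    deriv (fun r => f r * r ^ δ) x = 0 ↔ f' * x = -δ * f x := by
  have hprod : HasDerivAt (fun r => f r * r ^ δ) (f' * x ^ δ + f x * (δ * x ^ (δ - 1))) x :=
    hf.mul (Real.hasDerivAt_rpow_const (Or.inl hx.ne'))
  rw [hprod.deriv, rpow_eq_rpow_sub_one_mul hx.ne' δ,
    show f' * (x ^ (δ - 1) * x) + f x * (δ * x ^ (δ - 1)) =
      x ^ (δ - 1) * (f' * x + δ * f x) by ring,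
    mul_eq_zero, or_iff_right (Real.rpow_pos_of_pos hx _).ne']
  constructor <;> intro h <;> linarith

lemma hasDerivAt_mul_rpow_neg_two (hx : 0 < x) (hf : HasDerivAt f f' x)
    (hcrit : f' * x = -δ * f x) :
    HasDerivAt (fun r => f r * r ^ (-2 : ℝ)) (-(2 + δ) * f x * x ^ (-3 : ℝ)) x := by
  have hprod : HasDerivAt (fun r => f r * r ^ (-2 : ℝ))
      (f' * x ^ (-2 : ℝ) + f x * (-2 * x ^ (-3 : ℝ))) x :=
    hf.mul ((Real.hasDerivAt_rpow_const (p := -2) (Or.inl hx.ne')).congr_deriv (by norm_num))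
  refine hprod.congr_deriv ?_
  rw [rpow_eq_rpow_sub_one_mul hx.ne' (-2), show (-2 : ℝ) - 1 = -3 by norm_num]
  linear_combination x ^ (-3 : ℝ) * hcrit

lemma hasDerivAt_rpow_mul_one_sub (ω : ℝ) (hx : 0 < x) (hf : HasDerivAt f f' x)
    (hcrit : f' * x = -δ * f x) :
    HasDerivAt (fun r => r ^ δ * (1 - ω ^ 2 * f r * r ^ (-2 : ℝ)))
      (x ^ (δ - 1) * (δ + 2 * ω ^ 2 * f x * x ^ (-2 : ℝ))) x := by
  have hΩ : HasDerivAt (fun r => 1 - ω ^ 2 * f r * r ^ (-2 : ℝ))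
      (-(ω ^ 2 * (-(2 + δ) * f x * x ^ (-3 : ℝ)))) x := by
    simpa only [mul_assoc] using
      ((hasDerivAt_mul_rpow_neg_two hx hf hcrit).const_mul (ω ^ 2)).const_sub 1
  have hprod : HasDerivAt (fun r => r ^ δ * (1 - ω ^ 2 * f r * r ^ (-2 : ℝ)))
      (δ * x ^ (δ - 1) * (1 - ω ^ 2 * f x * x ^ (-2 : ℝ)) +
        x ^ δ * -(ω ^ 2 * (-(2 + δ) * f x * x ^ (-3 : ℝ)))) x :=
    (Real.hasDerivAt_rpow_const (Or.inl hx.ne')).mul hΩ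
  refine hprod.congr_deriv ?_
  rw [rpow_eq_rpow_sub_one_mul hx.ne' δ, rpow_eq_rpow_sub_one_mul hx.ne' (-2 : ℝ),
    show (-2 : ℝ) - 1 = -3 by norm_num]
  ring

theorem stmt15_general (f : ℝ → ℝ) (δ ω r₀ : ℝ) (hr : 0 < r₀) (hδ : 0 < δ)
    (hfpos : ∀ x, 0 < f x) (hf : DifferentiableAt ℝ f r₀)
    (h : deriv (fun r => f r * r ^ δ) r₀ = 0) :
    deriv (fun r => r ^ δ * (1 - ω ^ 2 * f r * r ^ (-2 : ℝ))) r₀ =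
        r₀ ^ (δ - 1) * (δ + 2 * ω ^ 2 * f r₀ * r₀ ^ (-2 : ℝ)) ∧
      0 < r₀ ^ (δ - 1) * (δ + 2 * ω ^ 2 * f r₀ * r₀ ^ (-2 : ℝ)) := by
  have hcrit := (deriv_mul_rpow_eq_zero_iff hr hf.hasDerivAt).1 h
  refine ⟨(hasDerivAt_rpow_mul_one_sub ω hr hf.hasDerivAt hcrit).deriv, ?_⟩
  have := hfpos r₀
  positivity

theorem stmt15 (f : ℝ → ℝ) (δ ω r₀ : ℝ) (hr : 0 < r₀) (hδ : 0 < δ)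
    (hfpos : ∀ x, 0 < f x) (hf : DifferentiableAt ℝ f r₀)
    (hΩ : 0 < 1 - ω ^ 2 * f r₀ * r₀ ^ (-2 : ℝ))
    (h : deriv (fun r => f r * r ^ δ) r₀ = 0) :
    deriv (fun r => r ^ δ * (1 - ω ^ 2 * f r * r ^ (-2 : ℝ))) r₀ =
        r₀ ^ (δ - 1) * (δ + 2 * ω ^ 2 * f r₀ * r₀ ^ (-2 : ℝ)) ∧
      0 < r₀ ^ (δ - 1) * (δ + 2 * ω ^ 2 * f r₀ * r₀ ^ (-2 : ℝ)) :=
  stmt15_general f δ ω r₀ hr hδ hfpos hf h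
end
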